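/- arXiv:1902.10419 — 2 statements merged into one kernel-verified Lean document; each statement's English description precedes it below -/
import Mathlib

section
/- Cauchy interlacing theorem: if A is a real symmetric n×n matrix and B is an m×m principal submatrix of A (m < n), then the eigenvalues of B interlace those of A: λ_i(A) ≥ λ_i(B) ≥ λ_{n-m+i}(A) for i = 1,…,m, where eigenvalues are ordered decreasingly. -/
/-!
Extending vectors by zero along `f` is an isometry `V : ℝᵐ → ℝⁿ` with
`⟪V y, A (V y)⟫ = ⟪y, B y⟫`. If `s` indexes eigenvectors of `B`, `t` indexes eigenvectors of `A`
and `#s + #t > n`, then the image under `V` of the span of the first family meets the span of the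
second, so some `y ≠ 0` has Rayleigh quotient `⟪y, B y⟫ / ‖y‖²` at least `min_{j ∈ s} μ_j` and at
most `max_{i ∈ t} λ_i`. The choices `s = {1, …, i}`, `t = {i, …, n}` and `s = {i, …, m}`,
`t = {1, …, n - m + i}` give the two interlacing inequalities.
-/

open Finset Submodule Module
open scoped RealInnerProductSpace

theorem LinearIndependent.finrank_span_image_finset {K M ι : Type*} [DivisionRing K]
    [AddCommGroup M] [Module K M] {v : ι → M} (hv : LinearIndependent K v) (s : Finset ι) :
    finrank K (span K (v '' s)) = #s := by
  rw [Set.image_eq_range]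
  exact (finrank_span_eq_card (hv.comp _ Subtype.val_injective)).trans (by simp)

theorem Orthonormal.inner_eq_zero_of_mem_span_image {ι E : Type*} [NormedAddCommGroup E]
    [InnerProductSpace ℝ E] {v : ι → E} (hv : Orthonormal ℝ v) {s : Set ι} {x : E}
    (hx : x ∈ span ℝ (v '' s)) {j : ι} (hj : j ∉ s) : ⟪v j, x⟫ = 0 := by
  obtain ⟨l, hl, rfl⟩ := (Finsupp.mem_span_image_iff_linearCombination ℝ).1 hx
  rw [real_inner_comm]
  exact hv.inner_finsupp_eq_zero hj hl

namespace OrthonormalBasis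

variable {ι E : Type*} [Fintype ι] [NormedAddCommGroup E] [InnerProductSpace ℝ E]
  (b : OrthonormalBasis ι ℝ E) {T : E →ₗ[ℝ] E} {μ : ι → ℝ}

theorem inner_self_map_eq_sum (hT : ∀ j, T (b j) = μ j • b j) (x : E) :
    ⟪x, T x⟫ = ∑ j, μ j * ⟪b j, x⟫ ^ 2 := by
  calc ⟪x, T x⟫ = ⟪x, T (∑ j, ⟪b j, x⟫ • b j)⟫ := by rw [b.sum_repr']
    _ = ∑ j, μ j * ⟪b j, x⟫ ^ 2 := by
      simp only [map_sum, map_smul, hT, inner_sum, real_inner_smul_right, real_inner_comm x]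
      exact sum_congr rfl fun j _ => by ring

variable {s : Finset ι} {c : ℝ} {x : E}

theorem mul_norm_sq_le_inner_self_map (hT : ∀ j, T (b j) = μ j • b j) (hc : ∀ j ∈ s, c ≤ μ j)
    (hx : x ∈ span ℝ (b '' s)) : c * ‖x‖ ^ 2 ≤ ⟪x, T x⟫ := by
  rw [b.inner_self_map_eq_sum hT, ← b.sum_sq_inner_right, mul_sum]
  refine sum_le_sum fun j _ => ?_
  by_cases hj : j ∈ s
  · exact mul_le_mul_of_nonneg_right (hc j hj) (sq_nonneg _)
  · simp [b.orthonormal.inner_eq_zero_of_mem_span_image hx hj]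

theorem inner_self_map_le_mul_norm_sq (hT : ∀ j, T (b j) = μ j • b j) (hc : ∀ j ∈ s, μ j ≤ c)
    (hx : x ∈ span ℝ (b '' s)) : ⟪x, T x⟫ ≤ c * ‖x‖ ^ 2 := by
  rw [b.inner_self_map_eq_sum hT, ← b.sum_sq_inner_right, mul_sum]
  refine sum_le_sum fun j _ => ?_
  by_cases hj : j ∈ s
  · exact mul_le_mul_of_nonneg_right (hc j hj) (sq_nonneg _)
  · simp [b.orthonormal.inner_eq_zero_of_mem_span_image hx hj]

end OrthonormalBasis

section Compression

variable {ι κ E F : Type*}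
  [NormedAddCommGroup E] [InnerProductSpace ℝ E] [FiniteDimensional ℝ E]
  [NormedAddCommGroup F] [InnerProductSpace ℝ F]

theorem LinearIsometry.exists_ne_zero_mem_span_image_map_mem_span_image (V : F →ₗᵢ[ℝ] E)
    {u : κ → F} (hu : Orthonormal ℝ u) {v : ι → E} (hv : Orthonormal ℝ v)
    (s : Finset κ) (t : Finset ι) (h : finrank ℝ E < #s + #t) :
    ∃ y ≠ 0, y ∈ span ℝ (u '' s) ∧ V y ∈ span ℝ (v '' t) := by
  have hVu : Orthonormal ℝ (V ∘ u) := V.orthonormal_comp_iff.2 hu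
  have hmeet : ¬ Disjoint (span ℝ ((V ∘ u) '' s)) (span ℝ (v '' t)) := fun hdisj => by
    have := Submodule.finrank_add_finrank_le_of_disjoint hdisj
    rw [hVu.linearIndependent.finrank_span_image_finset,
      hv.linearIndependent.finrank_span_image_finset] at this
    omega
  obtain ⟨x, hxs, hxt, hx0⟩ : ∃ x ∈ span ℝ ((V ∘ u) '' s), x ∈ span ℝ (v '' t) ∧ x ≠ 0 := by
    simpa only [Submodule.disjoint_def, not_forall, exists_prop] using hmeet
  rw [Set.image_comp, ← V.coe_toLinearMap, span_image] at hxs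
  obtain ⟨y, hy, rfl⟩ := hxs
  exact ⟨y, by rintro rfl; simp at hx0, hy, hxt⟩

variable [Fintype ι] [Fintype κ] (bE : OrthonormalBasis ι ℝ E) (bF : OrthonormalBasis κ ℝ F)
  (V : F →ₗᵢ[ℝ] E) {T : E →ₗ[ℝ] E} {S : F →ₗ[ℝ] F} {μ : ι → ℝ} {ν : κ → ℝ}
  {s : Finset κ} {t : Finset ι} {c d : ℝ}

theorem le_of_forall_le_compression_eigenvalue (hT : ∀ i, T (bE i) = μ i • bE i)
    (hS : ∀ j, S (bF j) = ν j • bF j) (hVTV : ∀ y, ⟪V y, T (V y)⟫ = ⟪y, S y⟫)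
    (hst : finrank ℝ E < #s + #t) (hc : ∀ j ∈ s, c ≤ ν j) (hd : ∀ i ∈ t, μ i ≤ d) : c ≤ d := by
  obtain ⟨y, hy0, hys, hyt⟩ :=
    V.exists_ne_zero_mem_span_image_map_mem_span_image bF.orthonormal bE.orthonormal s t hst
  refine le_of_mul_le_mul_right ?_ (by positivity : 0 < ‖y‖ ^ 2)
  calc c * ‖y‖ ^ 2 ≤ ⟪y, S y⟫ := bF.mul_norm_sq_le_inner_self_map hS hc hys
    _ = ⟪V y, T (V y)⟫ := (hVTV y).symm
    _ ≤ d * ‖V y‖ ^ 2 := bE.inner_self_map_le_mul_norm_sq hT hd hyt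
    _ = d * ‖y‖ ^ 2 := by rw [V.norm_map]

theorem le_of_forall_compression_eigenvalue_le (hT : ∀ i, T (bE i) = μ i • bE i)
    (hS : ∀ j, S (bF j) = ν j • bF j) (hVTV : ∀ y, ⟪V y, T (V y)⟫ = ⟪y, S y⟫)
    (hst : finrank ℝ E < #s + #t) (hd : ∀ j ∈ s, ν j ≤ d) (hc : ∀ i ∈ t, c ≤ μ i) : c ≤ d := by
  obtain ⟨y, hy0, hys, hyt⟩ :=
    V.exists_ne_zero_mem_span_image_map_mem_span_image bF.orthonormal bE.orthonormal s t hst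
  refine le_of_mul_le_mul_right ?_ (by positivity : 0 < ‖y‖ ^ 2)
  calc c * ‖y‖ ^ 2 = c * ‖V y‖ ^ 2 := by rw [V.norm_map]
    _ ≤ ⟪V y, T (V y)⟫ := bE.mul_norm_sq_le_inner_self_map hT hc hyt
    _ = ⟪y, S y⟫ := hVTV y
    _ ≤ d * ‖y‖ ^ 2 := bF.inner_self_map_le_mul_norm_sq hS hd hys

end Compression

namespace Matrix

variable {ι κ : Type*} [Fintype ι] [DecidableEq ι]

theorem IsHermitian.toEuclideanLin_eigenvectorBasis {A : Matrix ι ι ℝ} (hA : A.IsHermitian)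
    (j : ι) :
    toEuclideanLin A (hA.eigenvectorBasis j) = hA.eigenvalues j • hA.eigenvectorBasis j := by
  ext k
  simp [toLpLin_apply, hA.mulVec_eigenvectorBasis]

theorem transpose_submatrix_one_mul_mul {R : Type*} [Semiring R] (f : κ → ι) (A : Matrix ι ι R) :
    ((1 : Matrix ι ι R).submatrix id f)ᵀ * A * (1 : Matrix ι ι R).submatrix id f =
      A.submatrix f f := by
  rw [transpose_submatrix, transpose_one, ← submatrix_id_id A,
    ← submatrix_mul _ _ _ _ _ Function.bijective_id,
    ← submatrix_mul _ _ _ _ _ Function.bijective_id, Matrix.one_mul, Matrix.mul_one,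
    submatrix_id_id]

variable [Fintype κ] [DecidableEq κ]

theorem inner_toEuclideanLin_left (M : Matrix ι κ ℝ) (x : EuclideanSpace ℝ κ)
    (w : EuclideanSpace ℝ ι) : ⟪toEuclideanLin M x, w⟫ = ⟪x, toEuclideanLin Mᵀ w⟫ := by
  rw [← conjTranspose_eq_transpose_of_trivial, toEuclideanLin_conjTranspose_eq_adjoint,
    LinearMap.adjoint_inner_right]

theorem toEuclideanLin_mul_apply {o : Type*} (M : Matrix o ι ℝ) (N : Matrix ι κ ℝ)
    (x : EuclideanSpace ℝ κ) :
    toEuclideanLin (M * N) x = toEuclideanLin M (toEuclideanLin N x) := by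
  rw [toLpLin_mul 2 2 2]
  rfl

theorem inner_toEuclideanLin_submatrix_one (f : κ → ι) (A : Matrix ι ι ℝ)
    (y z : EuclideanSpace ℝ κ) :
    ⟪toEuclideanLin ((1 : Matrix ι ι ℝ).submatrix id f) y,
      toEuclideanLin A (toEuclideanLin ((1 : Matrix ι ι ℝ).submatrix id f) z)⟫ =
      ⟪y, toEuclideanLin (A.submatrix f f) z⟫ := by
  rw [inner_toEuclideanLin_left, ← transpose_submatrix_one_mul_mul, toEuclideanLin_mul_apply,
    toEuclideanLin_mul_apply]

end Matrix

namespace EuclideanSpace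

open Matrix

variable {ι κ : Type*} [Fintype ι] [DecidableEq ι] [Fintype κ] [DecidableEq κ]
  {f : κ → ι} (hf : Function.Injective f)

noncomputable def extendByZero : EuclideanSpace ℝ κ →ₗᵢ[ℝ] EuclideanSpace ℝ ι :=
  (toEuclideanLin ((1 : Matrix ι ι ℝ).submatrix id f)).isometryOfInner fun y z => by
    simpa [submatrix_one f hf] using inner_toEuclideanLin_submatrix_one f 1 y z

theorem inner_extendByZero_toEuclideanLin (A : Matrix ι ι ℝ) (y z : EuclideanSpace ℝ κ) :
    ⟪extendByZero hf y, toEuclideanLin A (extendByZero hf z)⟫ =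
      ⟪y, toEuclideanLin (A.submatrix f f) z⟫ :=
  inner_toEuclideanLin_submatrix_one f A y z

end EuclideanSpace

theorem stmt_4 {n m : ℕ} (hmn : m < n) (A : Matrix (Fin n) (Fin n) ℝ)
    (hA : A.IsHermitian) (f : Fin m → Fin n) (hf : Function.Injective f)
    (hB : (A.submatrix f f).IsHermitian)
    (σA : Equiv.Perm (Fin n)) (σB : Equiv.Perm (Fin m))
    (hσA : ∀ i j : Fin n, i ≤ j → hA.eigenvalues (σA j) ≤ hA.eigenvalues (σA i))
    (hσB : ∀ i j : Fin m, i ≤ j → hB.eigenvalues (σB j) ≤ hB.eigenvalues (σB i)) :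
    ∀ i : Fin m,
      hB.eigenvalues (σB i) ≤ hA.eigenvalues (σA (Fin.castLE hmn.le i)) ∧
      hA.eigenvalues (σA ⟨n - m + i.val, by have := i.isLt; omega⟩) ≤ hB.eigenvalues (σB i) := by
  intro i
  have hA_eigen := hA.toEuclideanLin_eigenvectorBasis
  have hB_eigen := hB.toEuclideanLin_eigenvectorBasis
  have hcompress y := EuclideanSpace.inner_extendByZero_toEuclideanLin hf A y y
  constructor
  · refine le_of_forall_le_compression_eigenvalue hA.eigenvectorBasis hB.eigenvectorBasis
      (EuclideanSpace.extendByZero hf) hA_eigen hB_eigen hcompress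
      (s := (Iic i).map σB.toEmbedding) (t := (Ici (Fin.castLE hmn.le i)).map σA.toEmbedding) ?_
      (forall_mem_map.2 fun j hj => hσB j i (mem_Iic.1 hj))
      (forall_mem_map.2 fun j hj => hσA _ j (mem_Ici.1 hj))
    simp only [finrank_euclideanSpace_fin, card_map, Fin.card_Iic, Fin.card_Ici, Fin.val_castLE]
    omega
  · refine le_of_forall_compression_eigenvalue_le hA.eigenvectorBasis hB.eigenvectorBasis
      (EuclideanSpace.extendByZero hf) hA_eigen hB_eigen hcompress
      (s := (Ici i).map σB.toEmbedding) (t := (Iic ⟨n - m + i.val, by omega⟩).map σA.toEmbedding)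
      ?_ (forall_mem_map.2 fun j hj => hσB i j (mem_Ici.1 hj))
      (forall_mem_map.2 fun j hj => hσA j _ (mem_Iic.1 hj))
    simp only [finrank_euclideanSpace_fin, card_map, Fin.card_Iic, Fin.card_Ici]
    omega
end

section
/- Let Σ ⊆ O × S be a set of k pairs between two k-element facility sets O and S such that every o ∈ O appears in exactly one pair and every s ∈ S appears in at most two pairs. Then ∑_{(o_i,s_j)∈Σ} ∑_{s∈S} d(s_j, s) ≥ g(S), where g(S) = (1/2)∑_{x∈S}∑_{y∈S} d(x,y). -/
/-! Averaging the triangle inequality `d(u, v) ≤ d(u, t) + d(t, v)` over all `u, v ∈ S` and all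
points `t` of a family of size `#S` bounds `∑ u ∈ S, ∑ v ∈ S, d(u, v)` by twice the total distance
from the family to `S`. -/

open Finset

theorem card_mul_sum_dist_le {X ι : Type*} [PseudoMetricSpace X] (T : Finset ι) (f : ι → X)
    (S : Finset X) :
    #T * ∑ u ∈ S, ∑ v ∈ S, dist u v ≤ 2 * #S * ∑ t ∈ T, ∑ s ∈ S, dist (f t) s := by
  calc (#T : ℝ) * ∑ u ∈ S, ∑ v ∈ S, dist u v
      = ∑ t ∈ T, ∑ u ∈ S, ∑ v ∈ S, dist u v := by rw [sum_const, nsmul_eq_mul]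
    _ ≤ ∑ t ∈ T, ∑ u ∈ S, ∑ v ∈ S, (dist (f t) u + dist (f t) v) := by
        gcongr with t _ u _ v _
        exact dist_triangle_left u v (f t)
    _ = 2 * #S * ∑ t ∈ T, ∑ s ∈ S, dist (f t) s := by
        simp only [sum_add_distrib, sum_const, nsmul_eq_mul, ← mul_sum]
        ring

theorem stmt_13_general {X : Type*} [MetricSpace X] {k : ℕ}
    (S : Finset X) (hS : S.card = k)
    (Sg : Finset (X × X)) (hcard : Sg.card = k) :
    (1 / 2) * ∑ u ∈ S, ∑ v ∈ S, dist u v ≤ ∑ p ∈ Sg, ∑ s ∈ S, dist p.2 s := by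
  rcases Nat.eq_zero_or_pos k with hk | hk
  · simp [card_eq_zero.mp (hS.trans hk)]
  · have hbound := card_mul_sum_dist_le Sg Prod.snd S
    rw [hcard, hS, mul_assoc, mul_left_comm] at hbound
    have hk_pos : (0 : ℝ) < k := by exact_mod_cast hk
    linarith [le_of_mul_le_mul_left hbound hk_pos]

theorem stmt_13 {X : Type*} [MetricSpace X] [DecidableEq X] {k : ℕ}
    (O S : Finset X) (hO : O.card = k) (hS : S.card = k)
    (Sg : Finset (X × X)) (hsub : Sg ⊆ O ×ˢ S) (hcard : Sg.card = k)
    (h1 : ∀ o ∈ O, (Sg.filter (fun p => p.1 = o)).card = 1)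
    (h2 : ∀ s ∈ S, (Sg.filter (fun p => p.2 = s)).card ≤ 2) :
    (1 / 2) * ∑ u ∈ S, ∑ v ∈ S, dist u v ≤ ∑ p ∈ Sg, ∑ s ∈ S, dist p.2 s :=
  stmt_13_general S hS Sg hcard
end
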